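/- arXiv:2102.02936 — 6 statements merged into one kernel-verified Lean document; each statement's English description precedes it below -/
import Mathlib

section
/- Let l and m be nonnegative integers and let p : ℝ → ℝ be a polynomial function of degree at most l + m. Then the Obreshkov formula is exact on p: for all t ∈ ℝ and all h ∈ ℝ, Σ_{i=0}^{m} (−1)^i · α_{i,l,m} · h^i · p^{(i)}(t + h) = Σ_{i=0}^{l} α_{i,m,l} · h^i · p^{(i)}(t), where p^{(i)} denotes the i-th derivative of p. -/
/-- The Obreshkov coefficient `α_{i,l,m} = ((m+l−i)! / (m+l)!) · binom(m, i)`. -/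
noncomputable def obreshkovAlpha (i l m : ℕ) : ℝ :=
  (Nat.factorial (m + l - i) : ℝ) / (Nat.factorial (m + l)) * (Nat.choose m i)

open Polynomial Finset Nat

lemma obr_choose_id (l m n : ℕ) :
    (l.choose n : ℝ) = ∑ i ∈ Finset.range (m + 1),
      (-1 : ℝ) ^ i * (m.choose i) *
        (if i ≤ n then ((m + l - i).choose (n - i) : ℝ) else 0) := by
  have h1 : ((X : ℝ[X]) + 1) ^ l =
      ∑ i ∈ Finset.range (m + 1),
        C ((-1 : ℝ) ^ i * (m.choose i)) * ((X + 1) ^ (m + l - i) * X ^ i) := by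
    have h0 : ((-X + (X + 1) : ℝ[X])) ^ m * (X + 1) ^ l
        = (∑ i ∈ Finset.range (m + 1), (-X) ^ i * (X + 1) ^ (m - i) * ((m.choose i : ℕ) : ℝ[X]))
            * (X + 1) ^ l := by
      rw [add_pow]
    have h2 : ((-X + (X + 1) : ℝ[X])) = 1 := by ring
    rw [h2, one_pow, one_mul, Finset.sum_mul] at h0
    rw [h0]
    refine Finset.sum_congr rfl fun i hi => ?_
    have him : i ≤ m := by simpa [Nat.lt_succ_iff] using hi
    have hexp : (X + 1 : ℝ[X]) ^ (m - i) * (X + 1) ^ l = (X + 1) ^ (m + l - i) := by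
      rw [← pow_add]; congr 1; omega
    have : ((m.choose i : ℕ) : ℝ[X]) = C ((m.choose i : ℕ) : ℝ) := by
      simp
    rw [this]
    rw [neg_pow, ← hexp]
    have hC : ((-1 : ℝ[X]) ^ i) = C ((-1 : ℝ) ^ i) := by
      simp [← C_neg, ← C_pow]
    rw [hC]
    rw [C_mul]
    ring
  have := congrArg (fun q : ℝ[X] => q.coeff n) h1
  simp only [coeff_X_add_one_pow, finset_sum_coeff, coeff_C_mul, coeff_mul_X_pow'] at this
  simpa [mul_ite] using this

lemma obr_nat_key (l m n i : ℕ) (hin : i ≤ n) (hn : n ≤ l + m) :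
    (m + l - i).choose (n - i) * n ! * (m + l - n)! = (m + l - i)! * n.descFactorial i := by
  have A := Nat.choose_mul_factorial_mul_factorial (show n - i ≤ m + l - i by omega)
  have hA : m + l - i - (n - i) = m + l - n := by omega
  rw [hA] at A
  have B := Nat.factorial_mul_descFactorial hin
  calc (m + l - i).choose (n - i) * n ! * (m + l - n)!
      = (m + l - i).choose (n - i) * ((n-i)! * n.descFactorial i) * (m + l - n)! := by rw [B]
    _ = ((m + l - i).choose (n - i) * (n-i)! * (m + l - n)!) * n.descFactorial i := by ring
    _ = (m + l - i)! * n.descFactorial i := by rw [A]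

lemma obr_key (l m n : ℕ) (hn : n ≤ l + m) :
    ∑ i ∈ Finset.range (m + 1),
      (-1 : ℝ) ^ i * ((m + l - i)! : ℝ) * (m.choose i) * (n.descFactorial i)
    = ((m + l - n)! : ℝ) * (l.choose n) * n ! := by
  have h := congrArg (fun x : ℝ => x * ((n ! : ℝ) * ((m + l - n)! : ℝ))) (obr_choose_id l m n)
  simp only [Finset.sum_mul] at h
  rw [show ((m + l - n)! : ℝ) * (l.choose n) * n ! =
      (l.choose n : ℝ) * ((n ! : ℝ) * ((m + l - n)! : ℝ)) by ring, h]
  refine Finset.sum_congr rfl fun i hi => ?_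
  by_cases hin : i ≤ n
  · rw [if_pos hin]
    have := obr_nat_key l m n i hin hn
    have hc : (((m + l - i).choose (n - i) * n ! * (m + l - n)! : ℕ) : ℝ)
        = (((m + l - i)! * n.descFactorial i : ℕ) : ℝ) := by rw [this]
    push_cast at hc
    linear_combination (-((-1 : ℝ) ^ i) * (m.choose i)) * hc
  · rw [if_neg hin]
    have : n.descFactorial i = 0 := Nat.descFactorial_eq_zero_iff_lt.2 (by omega)
    simp [this]

lemma obr_key3 (l m n : ℕ) (hn : n ≤ l + m) :
    ∑ i ∈ Finset.range (m + 1),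
      (-1 : ℝ) ^ i * obreshkovAlpha i l m * (n.descFactorial i)
    = obreshkovAlpha n m l * n ! := by
  have hfac : ((m + l)! : ℝ) ≠ 0 := by positivity
  apply mul_left_cancel₀ hfac
  rw [Finset.mul_sum]
  have hlm : ((l + m)! : ℝ) = ((m + l)! : ℝ) := by rw [Nat.add_comm]
  calc ∑ i ∈ Finset.range (m + 1),
        ((m + l)! : ℝ) * ((-1) ^ i * obreshkovAlpha i l m * (n.descFactorial i))
      = ∑ i ∈ Finset.range (m + 1),
        (-1 : ℝ) ^ i * ((m + l - i)! : ℝ) * (m.choose i) * (n.descFactorial i) := by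
        refine Finset.sum_congr rfl fun i hi => ?_
        unfold obreshkovAlpha
        have key : ((m + l - i)! : ℝ) / ((m + l)!) * ((m + l)!) = ((m + l - i)! : ℝ) :=
          div_mul_cancel₀ _ hfac
        linear_combination ((-1 : ℝ) ^ i * (m.choose i) * (n.descFactorial i)) * key
    _ = ((m + l - n)! : ℝ) * (l.choose n) * n ! := obr_key l m n hn
    _ = ((m + l)! : ℝ) * (obreshkovAlpha n m l * n !) := by
        unfold obreshkovAlpha
        rw [Nat.add_comm l m]
        have key : ((m + l - n)! : ℝ) / ((m + l)!) * ((m + l)!) = ((m + l - n)! : ℝ) :=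
          div_mul_cancel₀ _ hfac
        linear_combination (-(l.choose n : ℝ) * (n !)) * key

lemma obr_iteratedDeriv (P : Polynomial ℝ) (i : ℕ) :
    iteratedDeriv i (fun x => P.eval x) = fun x => (derivative^[i] P).eval x := by
  induction i with
  | zero => simp
  | succ k ih =>
    rw [iteratedDeriv_succ, ih, Function.iterate_succ_apply']
    funext x
    exact Polynomial.deriv _

lemma obr_monomial (l m : ℕ) (t h : ℝ) (n : ℕ) (hn : n ≤ l + m) :
    ∑ i ∈ Finset.range (m + 1), (-1 : ℝ) ^ i * obreshkovAlpha i l m * h ^ i *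
        (derivative^[i] ((X - C t) ^ n)).eval (t + h)
      = ∑ i ∈ Finset.range (l + 1), obreshkovAlpha i m l * h ^ i *
        (derivative^[i] ((X - C t) ^ n)).eval t := by
  simp only [iterate_derivative_X_sub_pow, eval_smul, eval_pow, eval_sub, eval_X, eval_C,
    smul_eq_mul, nsmul_eq_mul, eval_mul, eval_natCast, add_sub_cancel_left, sub_self]
  have hR : ∑ i ∈ Finset.range (l + 1),
      obreshkovAlpha i m l * h ^ i * ((n.descFactorial i : ℝ) * (0 : ℝ) ^ (n - i))
      = obreshkovAlpha n m l * (n ! : ℝ) * h ^ n := by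
    rcases le_or_gt n l with hnl | hnl
    · rw [Finset.sum_eq_single_of_mem n (Finset.mem_range.2 (by omega))]
      · simp [Nat.descFactorial_self]; ring
      · intro i hi hne
        rcases lt_or_gt_of_ne hne with hlt | hgt
        · rw [zero_pow (by omega : n - i ≠ 0)]; ring
        · rw [show n.descFactorial i = 0 from Nat.descFactorial_eq_zero_iff_lt.2 (by omega)]
          simp
    · have hchoose : l.choose n = 0 := Nat.choose_eq_zero_of_lt hnl
      have : obreshkovAlpha n m l = 0 := by unfold obreshkovAlpha; simp [hchoose]
      rw [this]
      rw [Finset.sum_eq_zero]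
      · ring
      · intro i hi
        have : i < n := by simp at hi; omega
        rw [zero_pow (by omega : n - i ≠ 0)]; ring
  rw [hR]
  have hL : ∑ i ∈ Finset.range (m + 1), (-1 : ℝ) ^ i * obreshkovAlpha i l m * h ^ i *
      ((n.descFactorial i : ℝ) * h ^ (n - i))
      = ∑ i ∈ Finset.range (m + 1),
        ((-1 : ℝ) ^ i * obreshkovAlpha i l m * (n.descFactorial i : ℝ)) * h ^ n := by
    refine Finset.sum_congr rfl fun i hi => ?_
    by_cases hin : i ≤ n
    · have : h ^ i * h ^ (n - i) = h ^ n := by rw [← pow_add]; congr 1; omega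
      calc (-1 : ℝ) ^ i * obreshkovAlpha i l m * h ^ i * ((n.descFactorial i : ℝ) * h ^ (n - i))
          = (-1 : ℝ) ^ i * obreshkovAlpha i l m * (n.descFactorial i : ℝ) * (h ^ i * h ^ (n - i)) := by
            ring
        _ = _ := by rw [this]
    · rw [show n.descFactorial i = 0 from Nat.descFactorial_eq_zero_iff_lt.2 (by omega)]
      simp
  rw [hL, ← Finset.sum_mul, obr_key3 l m n hn]

/-- The Obreshkov formula with parameters `(l, m)` is exact on polynomial
functions of degree at most `l + m`. -/
theorem obreshkov_exact_on_polynomials (l m : ℕ) (P : Polynomial ℝ)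
    (hP : P.natDegree ≤ l + m) (p : ℝ → ℝ) (hp : ∀ t, p t = P.eval t) :
    ∀ t h : ℝ,
      ∑ i ∈ Finset.range (m + 1),
        (-1 : ℝ) ^ i * obreshkovAlpha i l m * h ^ i * iteratedDeriv i p (t + h) =
      ∑ i ∈ Finset.range (l + 1),
        obreshkovAlpha i m l * h ^ i * iteratedDeriv i p t := by
  intro t h
  have hpfun : p = fun x => P.eval x := funext hp
  rw [hpfun]
  simp only [obr_iteratedDeriv]
  set Φ : Polynomial ℝ → Prop := fun Q =>
    ∑ i ∈ Finset.range (m + 1), (-1 : ℝ) ^ i * obreshkovAlpha i l m * h ^ i *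
        (derivative^[i] Q).eval (t + h)
      = ∑ i ∈ Finset.range (l + 1), obreshkovAlpha i m l * h ^ i *
        (derivative^[i] Q).eval t with hΦ
  show Φ P
  have hPsum : P = ∑ k ∈ (taylor t P).support, C ((taylor t P).coeff k) * (X - C t) ^ k := by
    conv_lhs => rw [← sum_taylor_eq P t]
    rw [Polynomial.sum_def]
  rw [hPsum]
  refine Finset.sum_induction _ Φ ?_ ?_ ?_
  · intro a b ha hb
    simp only [hΦ] at ha hb ⊢
    simp only [iterate_map_add, eval_add, mul_add, Finset.sum_add_distrib, ha, hb]
  · simp only [hΦ]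
    simp
  · intro k hk
    have hkle : k ≤ l + m := by
      have := Polynomial.le_natDegree_of_mem_supp k hk
      rw [Polynomial.natDegree_taylor] at this
      omega
    simp only [hΦ, Polynomial.iterate_derivative_C_mul, eval_mul, eval_C]
    have hmono := obr_monomial l m t h k hkle
    set a := (taylor t P).coeff k
    calc ∑ i ∈ Finset.range (m + 1), (-1 : ℝ) ^ i * obreshkovAlpha i l m * h ^ i *
            (a * (derivative^[i] ((X - C t) ^ k)).eval (t + h))
        = a * ∑ i ∈ Finset.range (m + 1), (-1 : ℝ) ^ i * obreshkovAlpha i l m * h ^ i *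
            (derivative^[i] ((X - C t) ^ k)).eval (t + h) := by
          rw [Finset.mul_sum]; exact Finset.sum_congr rfl fun i _ => by ring
      _ = a * ∑ i ∈ Finset.range (l + 1), obreshkovAlpha i m l * h ^ i *
            (derivative^[i] ((X - C t) ^ k)).eval t := by rw [hmono]
      _ = _ := by rw [Finset.mul_sum]; exact Finset.sum_congr rfl fun i _ => by ring
end

section
/- Let l and m be nonnegative integers, let z : ℝ → ℝ^s be infinitely differentiable, and fix t ∈ ℝ. Then, as h → 0, the truncation error of the Obreshkov formula satisfies Σ_{i=0}^{m} (−1)^i · α_{i,l,m} · h^i · z^{(i)}(t + h) − Σ_{i=0}^{l} α_{i,m,l} · h^i · z^{(i)}(t) = O(h^{l+m+1}), where z^{(i)} denotes the i-th derivative of z and the big-O is with respect to h tending to 0. -/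
open Finset Asymptotics Topology
open scoped Nat ContDiff

open Polynomial in
theorem alternating_sum_choose_mul_choose_sub {R : Type*} [CommRing R] (m l j : ℕ) :
    ∑ i ∈ range (m + 1),
      (-1 : R) ^ i * m.choose i * (if i ≤ j then ((m + l - i).choose (j - i) : R) else 0) =
      l.choose j := by
  have expansion : (1 + X : R[X]) ^ l =
      ∑ i ∈ range (m + 1), C ((-1 : R) ^ i * m.choose i) * (X ^ i * (1 + X) ^ (m + l - i)) := by
    calc (1 + X : R[X]) ^ l = (-X + (1 + X)) ^ m * (1 + X) ^ l := by simp
      _ = _ := by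
        rw [add_pow, sum_mul]
        refine sum_congr rfl fun i hi => ?_
        have hi : i ≤ m := Nat.lt_succ_iff.mp (mem_range.mp hi)
        rw [show m + l - i = m - i + l by omega, pow_add, neg_pow, map_mul, map_pow, map_neg,
          map_one, map_natCast]
        ring
  have := congrArg (coeff · j) expansion
  simp only [finsetSum_coeff, coeff_C_mul, coeff_X_pow_mul', coeff_one_add_X_pow] at this
  rw [this]

theorem Nat.factorial_sub_mul_descFactorial {n i j : ℕ} (hj : j ≤ n) :
    (n - i)! * j.descFactorial i =
      (n - j)! * j ! * if i ≤ j then (n - i).choose (j - i) else 0 := by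
  split_ifs with hij
  · rw [← Nat.factorial_mul_descFactorial hij, ← Nat.choose_mul_factorial_mul_factorial
      (show j - i ≤ n - i by omega), show n - i - (j - i) = n - j by omega]
    ring
  · simp [Nat.descFactorial_of_lt (not_le.mp hij)]

theorem obreshkovAlpha_eq_zero_of_lt {i l m : ℕ} (h : m < i) : obreshkovAlpha i l m = 0 := by
  simp [obreshkovAlpha, Nat.choose_eq_zero_of_lt h]

theorem sum_neg_one_pow_mul_obreshkovAlpha_mul_descFactorial {l m j : ℕ} (hj : j ≤ m + l) :
    ∑ i ∈ range (m + 1), (-1 : ℝ) ^ i * obreshkovAlpha i l m * j.descFactorial i =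
      obreshkovAlpha j m l * j ! := by
  have hfac : ((m + l)! : ℝ) ≠ 0 := by positivity
  calc ∑ i ∈ range (m + 1), (-1 : ℝ) ^ i * obreshkovAlpha i l m * j.descFactorial i
      = ((m + l - j)! * j ! / (m + l)! : ℝ) * ∑ i ∈ range (m + 1), (-1 : ℝ) ^ i * m.choose i *
          (if i ≤ j then ((m + l - i).choose (j - i) : ℝ) else 0) := by
        rw [mul_sum]
        refine sum_congr rfl fun i _ => ?_
        have key : ((m + l - i)! * j.descFactorial i : ℝ) = (m + l - j)! * j ! *
            (if i ≤ j then ((m + l - i).choose (j - i) : ℝ) else 0) := by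
          exact_mod_cast Nat.factorial_sub_mul_descFactorial (i := i) hj
        unfold obreshkovAlpha
        field_simp
        linear_combination (m.choose i : ℝ) * key
    _ = obreshkovAlpha j m l * j ! := by
        rw [alternating_sum_choose_mul_choose_sub, obreshkovAlpha, add_comm l m]
        ring

section IteratedDeriv

variable {𝕜 F : Type*} [NontriviallyNormedField 𝕜] [NormedAddCommGroup F] [NormedSpace 𝕜 F]

theorem iteratedDeriv_iteratedDeriv (a b : ℕ) (f : 𝕜 → F) :
    iteratedDeriv a (iteratedDeriv b f) = iteratedDeriv (a + b) f := by
  simp only [iteratedDeriv_eq_iterate, Function.iterate_add, Function.comp_apply]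

theorem iteratedDeriv_fun_pow_smul_zero {g : 𝕜 → F} {j : ℕ} (hg : ContDiffAt 𝕜 j g 0) (i : ℕ) :
    iteratedDeriv j (fun h => h ^ i • g h) 0 =
      (j.descFactorial i : 𝕜) • iteratedDeriv (j - i) g 0 := by
  have leibniz := iteratedDerivWithin_smul (Set.mem_univ (0 : 𝕜)) uniqueDiffOn_univ
    (f := (· ^ i)) (by fun_prop) hg.contDiffWithinAt
  simp only [iteratedDerivWithin_univ] at leibniz
  change iteratedDeriv j ((fun h : 𝕜 => h ^ i) • g) 0 = _
  rw [leibniz]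
  simp only [iteratedDeriv_fun_pow_zero, Nat.cast_ite, Nat.cast_zero, ite_smul, zero_smul,
    smul_ite, smul_zero]
  rw [sum_ite_eq' (range (j + 1))]
  split_ifs with hi
  · rw [Nat.descFactorial_eq_factorial_mul_choose, mul_comm, Nat.cast_mul, mul_smul]
    simp only [Nat.cast_smul_eq_nsmul]
  · rw [Nat.descFactorial_of_lt (by simpa [Nat.lt_succ_iff] using hi), Nat.cast_zero, zero_smul]

theorem iteratedDeriv_sum_pow_smul_iteratedDeriv_const_add_zero {z : 𝕜 → F}
    (hz : ContDiff 𝕜 ∞ z) (c : ℕ → 𝕜) (t : 𝕜) (N j : ℕ) :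
    iteratedDeriv j (fun h => ∑ i ∈ range N, (c i * h ^ i) • iteratedDeriv i z (t + h)) 0 =
      (∑ i ∈ range N, c i * j.descFactorial i) • iteratedDeriv j z t := by
  have shift_smooth (i : ℕ) : ContDiff 𝕜 ∞ fun h => iteratedDeriv i z (t + h) := by
    rw [iteratedDeriv_eq_iterate]
    fun_prop
  rw [iteratedDeriv_fun_sum fun i _ => (contDiff_infty.mp (by fun_prop) j).contDiffAt, sum_smul]
  refine sum_congr rfl fun i _ => ?_
  simp only [mul_smul, iteratedDeriv_fun_const_smul_field,
    iteratedDeriv_fun_pow_smul_zero (contDiff_infty.mp (shift_smooth i) j).contDiffAt,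
    iteratedDeriv_comp_const_add, add_zero, iteratedDeriv_iteratedDeriv]
  by_cases hij : i ≤ j
  · rw [Nat.sub_add_cancel hij]
  · simp [Nat.descFactorial_of_lt (not_le.mp hij)]

theorem iteratedDeriv_sum_pow_smul_const_zero (c : ℕ → 𝕜) (v : ℕ → F) (N j : ℕ) :
    iteratedDeriv j (fun h => ∑ i ∈ range N, (c i * h ^ i) • v i) (0 : 𝕜) =
      if j < N then (c j * j !) • v j else 0 := by
  have term (i : ℕ) : iteratedDeriv j (fun h => (c i * h ^ i) • v i) (0 : 𝕜) =
      if i = j then (c j * j !) • v j else 0 := by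
    rw [iteratedDeriv_smul_const (by fun_prop), iteratedDeriv_const_mul_field,
      iteratedDeriv_fun_pow_zero]
    rcases eq_or_ne i j with rfl | hij
    · simp
    · simp [hij, hij.symm]
  rw [iteratedDeriv_fun_sum fun i _ => by fun_prop]
  simp only [term, sum_ite_eq', mem_range]

end IteratedDeriv

theorem isBigO_sub_pow_succ_of_iteratedDeriv_eq_zero {E : Type*} [NormedAddCommGroup E]
    [NormedSpace ℝ E] {f : ℝ → E} {x₀ : ℝ} {n : ℕ} (hf : ContDiff ℝ (n + 1) f)
    (h0 : ∀ j ≤ n, iteratedDeriv j f x₀ = 0) :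
    f =O[𝓝 x₀] fun x => (x - x₀) ^ (n + 1) := by
  set w := ((n + 1)! : ℝ)⁻¹ • iteratedDeriv (n + 1) f x₀
  have taylor_poly : taylorWithinEval f (n + 1) Set.univ x₀ = fun x => (x - x₀) ^ (n + 1) • w := by
    funext x
    rw [taylor_within_apply, sum_range_succ, sum_eq_zero fun k hk => ?_, zero_add,
      iteratedDerivWithin_univ, mul_comm, mul_smul]
    rw [iteratedDerivWithin_univ, h0 k (Nat.lt_succ_iff.mp (mem_range.mp hk)), smul_zero]
  have remainder := (taylor_isLittleO_univ (x₀ := x₀) (n := n + 1) (mod_cast hf)).isBigO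
  rw [taylor_poly] at remainder
  have poly : (fun x => (x - x₀) ^ (n + 1) • w) =O[𝓝 x₀] fun x => (x - x₀) ^ (n + 1) :=
    .of_bound _ (.of_forall fun x => by rw [norm_smul, mul_comm])
  simpa using remainder.add poly

/-- The truncation error of the Obreshkov formula with parameters `(l, m)`,
applied to a smooth function `z : ℝ → ℝ^s` at a fixed time `t`, is
`O(h^(l+m+1))` as `h → 0`. -/
theorem obreshkov_truncation_error (l m : ℕ) {s : ℕ} (z : ℝ → (Fin s → ℝ))
    (hz : ContDiff ℝ (⊤ : ℕ∞) z) (t : ℝ) :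
    Asymptotics.IsBigO (nhds (0 : ℝ))
      (fun h : ℝ =>
        ∑ i ∈ Finset.range (m + 1),
          ((-1 : ℝ) ^ i * obreshkovAlpha i l m * h ^ i) • iteratedDeriv i z (t + h) -
        ∑ i ∈ Finset.range (l + 1),
          (obreshkovAlpha i m l * h ^ i) • iteratedDeriv i z t)
      (fun h : ℝ => h ^ (l + m + 1)) := by
  have hzi (i : ℕ) : ContDiff ℝ ∞ (iteratedDeriv i z) := by
    rw [iteratedDeriv_eq_iterate]
    exact hz.iterate_deriv i
  have hA : ContDiff ℝ ∞ fun h : ℝ => ∑ i ∈ range (m + 1),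
      ((-1 : ℝ) ^ i * obreshkovAlpha i l m * h ^ i) • iteratedDeriv i z (t + h) := by
    fun_prop
  have hB : ContDiff ℝ ∞ fun h : ℝ => ∑ i ∈ range (l + 1),
      (obreshkovAlpha i m l * h ^ i) • iteratedDeriv i z t := by
    fun_prop
  have bound := isBigO_sub_pow_succ_of_iteratedDeriv_eq_zero (x₀ := 0) (n := l + m)
    (contDiff_infty.mp (hA.sub hB) _) fun j hj => by
      rw [iteratedDeriv_fun_sub (contDiff_infty.mp hA j).contDiffAt
          (contDiff_infty.mp hB j).contDiffAt,
        iteratedDeriv_sum_pow_smul_iteratedDeriv_const_add_zero hz,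
        iteratedDeriv_sum_pow_smul_const_zero,
        sum_neg_one_pow_mul_obreshkovAlpha_mul_descFactorial (by omega)]
      split_ifs with hjl
      · exact sub_self _
      · simp [obreshkovAlpha_eq_zero_of_lt (not_lt.mp hjl)]
  simpa using bound
end

section
/- Let A and B be real n × n matrices such that the matrix pencil A + λB is regular, i.e., the polynomial λ ↦ det(A + λ·B) is not identically zero. Then there exist natural numbers r, s with r + s = n, invertible real n × n matrices P and Q, an r × r real matrix J, an s × s nilpotent real matrix N, and a bijection between the index set of size n and the disjoint sum of index sets of sizes r and s, under which the matrix P·A·Q is the block-diagonal matrix with blocks (I_r, N) and the matrix P·B·Q is the block-diagonal matrix with blocks (J, I_s). -/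
/-!
Some member `M = A + cB` of a regular pencil is invertible, because a nonzero polynomial over
`ℝ` has a non-root. The normalized pencil `X = M⁻¹A`, `Y = M⁻¹B` satisfies `X + cY = 1`, so `X`
and `Y` commute and the Fitting decomposition `ker Xᵏ ⊕ range Xᵏ` of `X` is invariant under `Y`.
On `range Xᵏ` the block of `X` is invertible; on `ker Xᵏ` it is nilpotent, so there `cY = 1 - X`
is invertible, hence so is the block of `Y`. Multiplying on the left by the inverse of the block
diagonal matrix formed by these two invertible blocks turns them into identities, and the other
block of `X` becomes nilpotent because it commutes with the inverse of the block of `Y`.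
-/

open Matrix Module LinearMap

theorem Commute.of_add_smul_eq_one {R A : Type*} [CommSemiring R] [Ring A] [Algebra R A]
    {a b : A} {c : R} (h : a + c • b = 1) : Commute a b := by
  rw [eq_sub_of_add_eq h]
  exact (Commute.one_left b).sub_left ((Commute.refl b).smul_left c)

theorem IsNilpotent.isUnit_of_add_smul_eq_one {R A : Type*} [CommRing R] [Ring A]
    [Algebra R A] {a b : A} {c : R} (ha : IsNilpotent a) (h : a + c • b = 1) : IsUnit b := by
  obtain ⟨u, hu⟩ := ha.isUnit_one_sub
  have hcb : c • b = ↑u := by rw [hu, ← h, add_sub_cancel_left]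
  refine ⟨⟨b, c • ↑u⁻¹, ?_, ?_⟩, rfl⟩
  · rw [mul_smul_comm, ← smul_mul_assoc, hcb, Units.mul_inv]
  · rw [smul_mul_assoc, ← mul_smul_comm, hcb, Units.inv_mul]

open Polynomial in
theorem Matrix.eval_det_map_C_add_X_smul_map_C {n R : Type*} [Fintype n] [DecidableEq n]
    [CommRing R] (A B : Matrix n n R) (c : R) :
    (det (A.map C + (X : R[X]) • B.map C)).eval c = det (A + c • B) := by
  rw [← coe_evalRingHom, RingHom.map_det]
  congr 1
  ext i j
  simp only [RingHom.mapMatrix_apply, map_apply, add_apply, smul_apply, smul_eq_mul,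
    coe_evalRingHom, eval_add, eval_mul, eval_C, eval_X]

open Polynomial in
theorem Matrix.exists_det_add_smul_ne_zero {n R : Type*} [Fintype n] [DecidableEq n]
    [CommRing R] [IsDomain R] [Infinite R] {A B : Matrix n n R}
    (h : det (A.map C + (X : R[X]) • B.map C) ≠ 0) : ∃ c : R, det (A + c • B) ≠ 0 := by
  by_contra! hc
  exact h (zero_of_eval_zero _ fun c => by rw [eval_det_map_C_add_X_smul_map_C, hc])

namespace Module.End

variable {R M : Type*} [CommRing R] [AddCommGroup M] [Module R M]

theorem mapsTo_ker_of_commute {f g : End R M} (h : Commute f g) :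
    ∀ x ∈ ker f, g x ∈ ker f := fun x (hx : f x = 0) =>
  show f (g x) = 0 by rw [← mul_apply, h.eq, mul_apply, hx, map_zero]

theorem mapsTo_range_of_commute {f g : End R M} (h : Commute f g) :
    ∀ x ∈ range f, g x ∈ range f := by
  rintro _ ⟨x, rfl⟩
  exact ⟨g x, by rw [← mul_apply, h.eq, mul_apply]⟩

theorem isNilpotent_restrict_ker_pow (f : End R M) (k : ℕ)
    (hf : ∀ x ∈ ker (f ^ k), f x ∈ ker (f ^ k)) : IsNilpotent (f.restrict hf) := by
  refine ⟨k, ?_⟩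
  rw [pow_restrict]
  ext x
  exact x.2

variable {K V : Type*} [Field K] [AddCommGroup V] [Module K V] [FiniteDimensional K V]

theorem isUnit_restrict_range_pow {f : End K V} {k : ℕ} (hk : 0 < k)
    (hcompl : IsCompl (ker (f ^ k)) (range (f ^ k)))
    (hf : ∀ x ∈ range (f ^ k), f x ∈ range (f ^ k)) : IsUnit (f.restrict hf) := by
  have hinj : Function.Injective (f.restrict hf) := by
    rw [← ker_eq_bot, Submodule.eq_bot_iff]
    rintro ⟨x, hxR⟩ hx
    have hxK : x ∈ ker (f ^ k) := by
      have hfx : f x = 0 := congrArg Subtype.val hx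
      rw [mem_ker, ← pow_sub_mul_pow f hk, mul_apply, pow_one, hfx, map_zero]
    exact Subtype.ext (Submodule.disjoint_def.mp hcompl.disjoint x hxK hxR)
  exact (isUnit_iff _).mpr ⟨hinj, injective_iff_surjective.mp hinj⟩

end Module.End

theorem LinearMap.toMatrix_map_prodEquivOfIsCompl {R M ι κ : Type*} [CommRing R]
    [AddCommGroup M] [Module R M] [Fintype ι] [Fintype κ] [DecidableEq ι] [DecidableEq κ]
    {p q : Submodule R M} (h : IsCompl p q) (bp : Basis ι R p) (bq : Basis κ R q)
    (f : End R M) (hp : ∀ x ∈ p, f x ∈ p) (hq : ∀ x ∈ q, f x ∈ q) :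
    toMatrix ((bp.prod bq).map (p.prodEquivOfIsCompl q h))
        ((bp.prod bq).map (p.prodEquivOfIsCompl q h)) f =
      fromBlocks (toMatrix bp bp (f.restrict hp)) 0 0 (toMatrix bq bq (f.restrict hq)) := by
  rw [toMatrix_map_left, toMatrix_map_right, ← toMatrix_prodMap]
  congr 1
  ext x <;> simp [hp, hq]

theorem LinearMap.toMatrix_basis_reindex {R M ι ι' : Type*} [CommRing R] [AddCommGroup M]
    [Module R M] [Fintype ι] [Fintype ι'] [DecidableEq ι] [DecidableEq ι']
    (b : Basis ι R M) (e : ι ≃ ι') (f : End R M) :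
    toMatrix (b.reindex e) (b.reindex e) f = reindex e e (toMatrix b b f) := by
  ext i j
  simp [toMatrix_apply]

theorem Module.End.exists_basis_toMatrix_eq_fromBlocks_of_commute {K V : Type*} [Field K]
    [AddCommGroup V] [Module K V] [FiniteDimensional K V] {f g : End K V} (h : Commute f g) :
    ∃ (r s : ℕ) (b : Basis (Fin r ⊕ Fin s) K V) (F₁ G₁ : Matrix (Fin r) (Fin r) K)
      (F₂ G₂ : Matrix (Fin s) (Fin s) K), IsUnit F₁ ∧ IsNilpotent F₂ ∧
      toMatrix b b f = fromBlocks F₁ 0 0 F₂ ∧ toMatrix b b g = fromBlocks G₁ 0 0 G₂ := by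
  obtain ⟨k, hcompl, hk⟩ :=
    ((eventually_isCompl_ker_pow_range_pow f).and (Filter.eventually_gt_atTop 0)).exists
  have hfR := mapsTo_range_of_commute ((Commute.refl f).pow_left k)
  have hfK := mapsTo_ker_of_commute ((Commute.refl f).pow_left k)
  have hgR := mapsTo_range_of_commute (h.pow_left k)
  have hgK := mapsTo_ker_of_commute (h.pow_left k)
  set bR := finBasis K (range (f ^ k))
  set bK := finBasis K (ker (f ^ k))
  exact ⟨_, _, (bR.prod bK).map (Submodule.prodEquivOfIsCompl _ _ hcompl.symm),
    toMatrix bR bR (f.restrict hfR), toMatrix bR bR (g.restrict hgR),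
    toMatrix bK bK (f.restrict hfK), toMatrix bK bK (g.restrict hgK),
    (isUnit_toMatrix_iff _).mpr (isUnit_restrict_range_pow hk hcompl hfR),
    (isNilpotent_restrict_ker_pow f k hfK).map (toMatrixAlgEquiv bK),
    toMatrix_map_prodEquivOfIsCompl _ bR bK f hfR hfK,
    toMatrix_map_prodEquivOfIsCompl _ bR bK g hgR hgK⟩

theorem Matrix.exists_reindex_conj_eq_fromBlocks_of_commute {n K : Type*} [Fintype n]
    [DecidableEq n] [Field K] {X Y : Matrix n n K} (h : Commute X Y) :
    ∃ (r s : ℕ) (e : n ≃ Fin r ⊕ Fin s) (S : Matrix n n K), IsUnit S ∧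
      ∃ (F₁ G₁ : Matrix (Fin r) (Fin r) K) (F₂ G₂ : Matrix (Fin s) (Fin s) K),
        IsUnit F₁ ∧ IsNilpotent F₂ ∧
        reindex e e (S⁻¹ * X * S) = fromBlocks F₁ 0 0 F₂ ∧
        reindex e e (S⁻¹ * Y * S) = fromBlocks G₁ 0 0 G₂ := by
  obtain ⟨r, s, b, F₁, G₁, F₂, G₂, hF₁, hF₂, hX, hY⟩ :=
    Module.End.exists_basis_toMatrix_eq_fromBlocks_of_commute (h.map toLinAlgEquiv')
  set std := Pi.basisFun K n
  set e := std.indexEquiv b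
  set β := b.reindex e.symm
  have hinv : (std.toMatrix β)⁻¹ = β.toMatrix std :=
    inv_eq_left_inv (β.toMatrix_mul_toMatrix_flip std)
  have hconj : ∀ Z, reindex e e ((std.toMatrix β)⁻¹ * Z * std.toMatrix β) =
      toMatrix b b (toLin' Z) := fun Z => by
    rw [hinv, ← toMatrix'_toLin' Z, ← toMatrix_eq_toMatrix',
      basis_toMatrix_mul_linearMap_toMatrix_mul_basis_toMatrix, toMatrix_basis_reindex,
      reindex_apply, reindex_apply, submatrix_submatrix]
    simp
  have hS : IsUnit (std.toMatrix β) :=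
    (isUnit_iff_isUnit_det _).mpr (isUnit_det_of_left_inverse (β.toMatrix_mul_toMatrix_flip std))
  exact ⟨r, s, e, std.toMatrix β, hS, F₁, G₁, F₂, G₂, hF₁, hF₂,
    (hconj X).trans hX, (hconj Y).trans hY⟩

theorem Matrix.exists_isUnit_mul_fromBlocks_eq {m n K : Type*} [Fintype m] [Fintype n]
    [DecidableEq m] [DecidableEq n] [CommRing K] {F₁ G₁ : Matrix m m K}
    {F₂ G₂ : Matrix n n K} {c : K} (hF₁ : IsUnit F₁) (hF₂ : IsNilpotent F₂)
    (h : fromBlocks F₁ 0 0 F₂ + c • fromBlocks G₁ 0 0 G₂ = 1) :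
    ∃ D : Matrix (m ⊕ n) (m ⊕ n) K, IsUnit D ∧
      ∃ (J : Matrix m m K) (N : Matrix n n K), IsNilpotent N ∧
        D * fromBlocks F₁ 0 0 F₂ = fromBlocks 1 0 0 N ∧
        D * fromBlocks G₁ 0 0 G₂ = fromBlocks J 0 0 1 := by
  have h₂ : F₂ + c • G₂ = 1 := by
    rw [fromBlocks_smul, fromBlocks_add, ← fromBlocks_one, fromBlocks_inj] at h
    exact h.2.2.2
  obtain ⟨u, rfl⟩ := hF₁
  obtain ⟨v, rfl⟩ := hF₂.isUnit_of_add_smul_eq_one h₂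
  refine ⟨fromBlocks ↑u⁻¹ 0 0 ↑v⁻¹, by simp, (↑u⁻¹ : Matrix m m K) * G₁,
    (↑v⁻¹ : Matrix n n K) * F₂,
    (Commute.of_add_smul_eq_one h₂).symm.units_inv_left.isNilpotent_mul_left hF₂, ?_, ?_⟩ <;>
  simp [fromBlocks_multiply]

/-- Weierstrass canonical form: if the matrix pencil `A + λB` is regular
(the polynomial `λ ↦ det(A + λB)` is not the zero polynomial), then there are
invertible `P, Q` bringing `(A, B)` simultaneously to the block-diagonal
canonical form `(diag(I_r, N), diag(J, I_s))` with `N` nilpotent. -/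
theorem weierstrass_canonical_form {n : ℕ} (A B : Matrix (Fin n) (Fin n) ℝ)
    (hreg :
      Matrix.det (A.map (Polynomial.C) +
        (Polynomial.X : Polynomial ℝ) • B.map Polynomial.C) ≠ 0) :
    ∃ (r s : ℕ) (_ : r + s = n) (P Q : Matrix (Fin n) (Fin n) ℝ),
      IsUnit P ∧ IsUnit Q ∧
      ∃ (J : Matrix (Fin r) (Fin r) ℝ) (N : Matrix (Fin s) (Fin s) ℝ),
        IsNilpotent N ∧
        ∃ e : Fin n ≃ Fin r ⊕ Fin s,
          Matrix.reindex e e (P * A * Q) = Matrix.fromBlocks 1 0 0 N ∧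
          Matrix.reindex e e (P * B * Q) = Matrix.fromBlocks J 0 0 1 := by
  obtain ⟨c, hc⟩ := exists_det_add_smul_ne_zero hreg
  set M := A + c • B
  have hsum : M⁻¹ * A + c • (M⁻¹ * B) = 1 := by
    rw [← mul_smul_comm, ← mul_add]
    exact nonsing_inv_mul M hc.isUnit
  obtain ⟨r, s, e, S, hS, F₁, G₁, F₂, G₂, hF₁, hF₂, hX, hY⟩ :=
    exists_reindex_conj_eq_fromBlocks_of_commute (Commute.of_add_smul_eq_one hsum)
  have hblocks : fromBlocks F₁ 0 0 F₂ + c • fromBlocks G₁ 0 0 G₂ = 1 := by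
    rw [← hX, ← hY, ← coe_reindexAlgEquiv ℝ ℝ, ← map_smul, ← map_add, ← smul_mul_assoc,
      ← mul_smul_comm, ← add_mul, ← mul_add, hsum, mul_one,
      nonsing_inv_mul S ((isUnit_iff_isUnit_det S).mp hS), map_one]
  obtain ⟨D, hD, J, N, hN, hDX, hDY⟩ := exists_isUnit_mul_fromBlocks_eq hF₁ hF₂ hblocks
  have hconj : ∀ Z, reindex e e ((reindexAlgEquiv ℝ ℝ e).symm D * S⁻¹ * M⁻¹ * Z * S) =
      D * reindex e e (S⁻¹ * (M⁻¹ * Z) * S) := fun Z => by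
    simp only [← coe_reindexAlgEquiv ℝ ℝ, mul_assoc, map_mul, AlgEquiv.apply_symm_apply]
  have hM : IsUnit M := (isUnit_iff_isUnit_det M).mpr hc.isUnit
  refine ⟨r, s, by simpa using (Fintype.card_congr e).symm,
    (reindexAlgEquiv ℝ ℝ e).symm D * S⁻¹ * M⁻¹, S,
    ((hD.map _).mul (isUnit_nonsing_inv_iff.mpr hS)).mul (isUnit_nonsing_inv_iff.mpr hM),
    hS, J, N, hN, e, ?_, ?_⟩
  · rw [hconj, hX, hDX]
  · rw [hconj, hY, hDY]
end

section
/- Let N be a real s × s matrix with N^k = 0 for a positive integer k, and let u : ℝ → ℝ^s be infinitely differentiable. If z : ℝ → ℝ^s is differentiable and satisfies N · z′(t) = −z(t) + u(t) for all t ∈ ℝ, then z is uniquely determined by u: for all t, z(t) = Σ_{i=0}^{k−1} (−1)^i · N^i · u^{(i)}(t), where u^{(i)} denotes the i-th derivative of u. -/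
/-!
The candidate `w = ∑_{i<k} (-1)^i N^i u^{(i)}` solves `N w' = -w + u`: differentiating termwise
and multiplying by `N` shifts the sum by one index, and the sum telescopes because `N^k = 0`.
For uniqueness, the difference `e` of two solutions satisfies `N e' = -e`; if `N^{j+1} e = 0`
then also `N^{j+1} e' = 0`, so `N^j e = -N^{j+1} e' = 0`, and descending from `N^k e = 0`
gives `e = 0`.
-/

open Finset

section Nilpotent

variable {𝕜 E : Type*} [NontriviallyNormedField 𝕜] [NormedAddCommGroup E] [NormedSpace 𝕜 E]
  (N : E →L[𝕜] E)

theorem hasDerivAt_iteratedDeriv_of_contDiff {u : 𝕜 → E} {n i : ℕ} (hu : ContDiff 𝕜 n u)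
    (hi : i < n) (t : 𝕜) : HasDerivAt (iteratedDeriv i u) (iteratedDeriv (i + 1) u t) t := by
  rw [iteratedDeriv_succ]
  exact (hu.differentiable_iteratedDeriv i (mod_cast hi) t).hasDerivAt

theorem pow_apply_eq_zero_of_pow_succ_apply_eq_zero {e : 𝕜 → E} (he : Differentiable 𝕜 e)
    (h : ∀ t, N (deriv e t) = -e t) {j : ℕ} (hj : ∀ t, (N ^ (j + 1)) (e t) = 0) (t : 𝕜) :
    (N ^ j) (e t) = 0 := by
  have hderiv : deriv (fun t ↦ (N ^ (j + 1)) (e t)) t = (N ^ (j + 1)) (deriv e t) :=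
    ((N ^ (j + 1)).hasFDerivAt.comp_hasDerivAt t (he t).hasDerivAt).deriv
  simp only [hj, deriv_const'] at hderiv
  rw [← neg_eq_zero, ← map_neg, ← h, ← mul_apply_eq_comp, ← pow_succ, hderiv]

theorem eq_zero_of_apply_deriv_eq_neg {k : ℕ} (hN : N ^ k = 0) {e : 𝕜 → E}
    (he : Differentiable 𝕜 e) (h : ∀ t, N (deriv e t) = -e t) : e = 0 := by
  suffices ∀ n : ℕ, (∀ t, (N ^ n) (e t) = 0) → e = 0 from this k (by simp [hN])
  intro n
  induction n with
  | zero => exact fun h ↦ funext (by simpa using h)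
  | succ n ih => exact fun hn ↦ ih (pow_apply_eq_zero_of_pow_succ_apply_eq_zero N he h hn)

variable (k : ℕ) (u : 𝕜 → E)

noncomputable def nilpotentSolution (t : 𝕜) : E :=
  ∑ i ∈ range k, (-1 : 𝕜) ^ i • (N ^ i) (iteratedDeriv i u t)

variable {N k u}

theorem hasDerivAt_nilpotentSolution (hu : ContDiff 𝕜 k u) (t : 𝕜) :
    HasDerivAt (nilpotentSolution N k u)
      (∑ i ∈ range k, (-1 : 𝕜) ^ i • (N ^ i) (iteratedDeriv (i + 1) u t)) t := by
  refine HasDerivAt.fun_sum fun i hi ↦ ?_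
  exact ((N ^ i).hasFDerivAt.comp_hasDerivAt t
    (hasDerivAt_iteratedDeriv_of_contDiff hu (mem_range.mp hi) t)).const_smul _

theorem apply_deriv_nilpotentSolution (hN : N ^ k = 0) (hu : ContDiff 𝕜 k u) (t : 𝕜) :
    N (deriv (nilpotentSolution N k u) t) = -nilpotentSolution N k u t + u t := by
  set f : ℕ → E := fun i ↦ (-1 : 𝕜) ^ i • (N ^ i) (iteratedDeriv i u t)
  have htelescope : ∑ i ∈ range k, f (i + 1) + f 0 = nilpotentSolution N k u t + f k :=
    (sum_range_succ' f k).symm.trans (sum_range_succ f k)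
  have hf0 : f 0 = u t := by simp [f]
  have hfk : f k = 0 := by simp only [f, hN, zero_apply, smul_zero]
  rw [(hasDerivAt_nilpotentSolution hu t).deriv, map_sum]
  calc ∑ i ∈ range k, N ((-1 : 𝕜) ^ i • (N ^ i) (iteratedDeriv (i + 1) u t))
      = -∑ i ∈ range k, f (i + 1) := by
        rw [← sum_neg_distrib]
        refine sum_congr rfl fun i _ ↦ ?_
        rw [map_smul, ← mul_apply_eq_comp, ← pow_succ']
        simp only [f, pow_succ (-1 : 𝕜), mul_neg_one, neg_smul, neg_neg]
    _ = -nilpotentSolution N k u t + u t := by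
        rw [hf0, hfk] at htelescope
        rw [eq_sub_of_add_eq htelescope]
        abel

theorem eq_nilpotentSolution (hN : N ^ k = 0) (hu : ContDiff 𝕜 k u) {z : 𝕜 → E}
    (hz : Differentiable 𝕜 z) (heq : ∀ t, N (deriv z t) = -z t + u t) :
    z = nilpotentSolution N k u := by
  have hw : Differentiable 𝕜 (nilpotentSolution N k u) := fun t ↦
    (hasDerivAt_nilpotentSolution hu t).differentiableAt
  refine sub_eq_zero.mp (eq_zero_of_apply_deriv_eq_neg N hN (hz.sub hw) fun t ↦ ?_)
  rw [deriv_sub (hz t) (hw t), map_sub, heq, apply_deriv_nilpotentSolution hN hu]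
  simp only [Pi.sub_apply]
  abel

end Nilpotent

theorem algebraic_subsystem_solution_unique_general {s : ℕ} (k : ℕ)
    (N : Matrix (Fin s) (Fin s) ℝ) (hN : N ^ k = 0)
    (u : ℝ → Fin s → ℝ) (hu : ContDiff ℝ (⊤ : ℕ∞) u)
    (z : ℝ → Fin s → ℝ) (hz : Differentiable ℝ z)
    (heq : ∀ t : ℝ, N.mulVec (deriv z t) = -z t + u t) :
    ∀ t : ℝ,
      z t = ∑ i ∈ Finset.range k,
        ((-1 : ℝ) ^ i) • (N ^ i).mulVec (iteratedDeriv i u t) := by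
  let toCLM := Matrix.toLinAlgEquiv'.trans (Module.End.toContinuousLinearMap (Fin s → ℝ))
  have hz_eq := eq_nilpotentSolution (N := toCLM N) (by rw [← map_pow, hN, map_zero])
    (hu.of_le (mod_cast le_top)) hz heq
  have htoCLM_apply (M : Matrix (Fin s) (Fin s) ℝ) (v : Fin s → ℝ) : toCLM M v = M.mulVec v := rfl
  intro t
  simpa only [nilpotentSolution, ← map_pow, htoCLM_apply] using congrFun hz_eq t

/-- The purely algebraic subsystem `N z′ = −z + u` with `N` nilpotent
(`N^k = 0`) has the unique solution
`z(t) = Σ_{i=0}^{k−1} (−1)^i N^i u^{(i)}(t)`. -/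
theorem algebraic_subsystem_solution_unique {s : ℕ} (k : ℕ) (hk : 0 < k)
    (N : Matrix (Fin s) (Fin s) ℝ) (hN : N ^ k = 0)
    (u : ℝ → Fin s → ℝ) (hu : ContDiff ℝ (⊤ : ℕ∞) u)
    (z : ℝ → Fin s → ℝ) (hz : Differentiable ℝ z)
    (heq : ∀ t : ℝ, N.mulVec (deriv z t) = -z t + u t) :
    ∀ t : ℝ,
      z t = ∑ i ∈ Finset.range k,
        ((-1 : ℝ) ^ i) • (N ^ i).mulVec (iteratedDeriv i u t) :=
  algebraic_subsystem_solution_unique_general k N hN u hu z hz heq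
end

section
/- Let N be a real s × s matrix with N^k = 0 for a positive integer k, and let u : ℝ → ℝ^s be infinitely differentiable. Define z : ℝ → ℝ^s by z(t) = Σ_{i=0}^{k−1} (−1)^i · N^i · u^{(i)}(t), where u^{(i)} denotes the i-th derivative of u. Then z is differentiable and satisfies N · z′(t) = −z(t) + u(t) for all t ∈ ℝ. -/
/-!
Differentiating `z` term by term shifts every derivative index by one, and multiplying by `N`
shifts every matrix power by one with a sign change. So `N z'` telescopes against `z`: only the
`i = 0` term `u` and the term with `N ^ k = 0` survive, which gives `N z' = -z + u`.
-/

open Finset Matrix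

theorem Matrix.mulVec_sum_neg_one_pow_smul_pow_mulVec_succ {n R : Type*} [Fintype n]
    [DecidableEq n] [CommRing R] {N : Matrix n n R} {k : ℕ} (hN : N ^ k = 0) (v : ℕ → n → R) :
    N *ᵥ ∑ i ∈ range k, (-1 : R) ^ i • (N ^ i) *ᵥ v (i + 1)
      = -∑ i ∈ range k, (-1 : R) ^ i • (N ^ i) *ᵥ v i + v 0 := by
  set w : ℕ → n → R := fun i => (-1 : R) ^ i • (N ^ i) *ᵥ v i with hw
  have hshift (i : ℕ) : N *ᵥ ((-1 : R) ^ i • (N ^ i) *ᵥ v (i + 1)) = -w (i + 1) := by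
    rw [mulVec_smul, mulVec_mulVec, ← pow_succ']
    simp only [hw, pow_succ (-1 : R), mul_neg_one, neg_smul, neg_neg]
  calc N *ᵥ ∑ i ∈ range k, (-1 : R) ^ i • (N ^ i) *ᵥ v (i + 1)
      = -∑ i ∈ range k, w (i + 1) := by
        simp only [mulVec_sum, hshift, sum_neg_distrib]
    _ = -(∑ i ∈ range k, w i + w k) + w 0 := by
        rw [← sum_range_succ, sum_range_succ']
        abel
    _ = -∑ i ∈ range k, w i + v 0 := by
        simp [hw, hN]

theorem HasDerivAt.matrix_mulVec {m n 𝕜 : Type*} [Fintype m] [Fintype n]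
    [NontriviallyNormedField 𝕜] [CompleteSpace 𝕜] {f : 𝕜 → n → 𝕜} {f' : n → 𝕜} {t : 𝕜}
    (hf : HasDerivAt f f' t) (M : Matrix m n 𝕜) :
    HasDerivAt (fun s => M *ᵥ f s) (M *ᵥ f') t :=
  M.mulVecLin.toContinuousLinearMap.hasFDerivAt.comp_hasDerivAt t hf

section iteratedDeriv

variable {𝕜 : Type*} [NontriviallyNormedField 𝕜]

theorem ContDiff.hasDerivAt_iteratedDeriv {E : Type*} [NormedAddCommGroup E] [NormedSpace 𝕜 E]
    {n : WithTop ℕ∞} {u : 𝕜 → E} (hu : ContDiff 𝕜 n u) {i : ℕ} (hi : (i : WithTop ℕ∞) < n)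
    (t : 𝕜) :
    HasDerivAt (iteratedDeriv i u) (iteratedDeriv (i + 1) u t) t := by
  rw [iteratedDeriv_succ]
  exact (hu.differentiable_iteratedDeriv i hi t).hasDerivAt

theorem ContDiff.hasDerivAt_sum_smul_mulVec_iteratedDeriv [CompleteSpace 𝕜] {m n : Type*}
    [Fintype m] [Fintype n] {k : ℕ} {u : 𝕜 → n → 𝕜} (hu : ContDiff 𝕜 k u) (c : ℕ → 𝕜)
    (M : ℕ → Matrix m n 𝕜) (t : 𝕜) :
    HasDerivAt (fun s => ∑ i ∈ range k, c i • M i *ᵥ iteratedDeriv i u s)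
      (∑ i ∈ range k, c i • M i *ᵥ iteratedDeriv (i + 1) u t) t :=
  HasDerivAt.fun_sum fun i hi =>
    ((hu.hasDerivAt_iteratedDeriv (by exact_mod_cast mem_range.mp hi) t).matrix_mulVec
      (M i)).const_smul (c i)

end iteratedDeriv

theorem algebraic_subsystem_solution_exists_general {s : ℕ} (k : ℕ)
    (N : Matrix (Fin s) (Fin s) ℝ) (hN : N ^ k = 0)
    (u : ℝ → Fin s → ℝ) (hu : ContDiff ℝ (⊤ : ℕ∞) u)
    (z : ℝ → Fin s → ℝ)
    (hz : ∀ t : ℝ,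
      z t = ∑ i ∈ Finset.range k,
        ((-1 : ℝ) ^ i) • (N ^ i).mulVec (iteratedDeriv i u t)) :
    Differentiable ℝ z ∧ ∀ t : ℝ, N.mulVec (deriv z t) = -z t + u t := by
  have hderiv (t : ℝ) : HasDerivAt z
      (∑ i ∈ range k, (-1 : ℝ) ^ i • (N ^ i) *ᵥ iteratedDeriv (i + 1) u t) t := by
    rw [funext hz]
    exact (hu.of_le (by exact_mod_cast le_top)).hasDerivAt_sum_smul_mulVec_iteratedDeriv _ _ t
  refine ⟨fun t => (hderiv t).differentiableAt, fun t => ?_⟩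
  rw [(hderiv t).deriv, mulVec_sum_neg_one_pow_smul_pow_mulVec_succ hN (iteratedDeriv · u t),
    hz t, iteratedDeriv_zero]

/-- Conversely, `z(t) = Σ_{i=0}^{k−1} (−1)^i N^i u^{(i)}(t)` is differentiable
and solves the purely algebraic subsystem `N z′ = −z + u` when `N^k = 0`. -/
theorem algebraic_subsystem_solution_exists {s : ℕ} (k : ℕ) (hk : 0 < k)
    (N : Matrix (Fin s) (Fin s) ℝ) (hN : N ^ k = 0)
    (u : ℝ → Fin s → ℝ) (hu : ContDiff ℝ (⊤ : ℕ∞) u)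
    (z : ℝ → Fin s → ℝ)
    (hz : ∀ t : ℝ,
      z t = ∑ i ∈ Finset.range k,
        ((-1 : ℝ) ^ i) • (N ^ i).mulVec (iteratedDeriv i u t)) :
    Differentiable ℝ z ∧ ∀ t : ℝ, N.mulVec (deriv z t) = -z t + u t :=
  algebraic_subsystem_solution_exists_general k N hN u hu z hz
end

section
/- Let C and G be real n × n matrices and suppose P and Q are invertible real n × n matrices such that, under a fixed bijection of the index set of size n with the disjoint sum of index sets of sizes r and s, P·C·Q is the block-diagonal matrix with blocks (I_r, N) and P·G·Q is the block-diagonal matrix with blocks (J, I_s), where J is an r × r real matrix and N is an s × s real matrix. Let b : ℝ → ℝ^n, let x : ℝ → ℝ^n be differentiable, define z(t) = Q⁻¹ · x(t) with components z_D(t) ∈ ℝ^r (first block) and z_A(t) ∈ ℝ^s (second block), and define u_D(t) ∈ ℝ^r and u_A(t) ∈ ℝ^s as the corresponding blocks of P · b(t). Then x satisfies C · x′(t) + G · x(t) = b(t) for all t if and only if z_D′(t) = −J · z_D(t) + u_D(t) and N · z_A′(t) = −z_A(t) + u_A(t) for all t. -/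
/-!
Multiplying the DAE by the invertible `P` and substituting `x = Q z` gives
`(P C Q) z' + (P G Q) z = P b`. After reindexing along `e` both coefficient matrices are block
diagonal, so this system is exactly its two block rows. Differentiation commutes with the constant
matrix `Q⁻¹`, so the blocks of `z'` are `z_D'` and `z_A'`.
-/

open Matrix

namespace Matrix

theorem hasDerivAt_mulVec {𝕜 : Type*} [NontriviallyNormedField 𝕜] {m n : Type*} [Fintype m]
    [Fintype n] (A : Matrix m n 𝕜) {x : 𝕜 → n → 𝕜} {x' : n → 𝕜} {t : 𝕜}
    (hx : HasDerivAt x x' t) : HasDerivAt (fun t => A *ᵥ x t) (A *ᵥ x') t :=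
  hasDerivAt_pi.2 fun i => by
    simpa [mulVec, dotProduct] using
      HasDerivAt.fun_sum fun j _ => (hasDerivAt_pi.1 hx j).const_mul (A i j)

theorem deriv_mulVec_comp {𝕜 : Type*} [NontriviallyNormedField 𝕜] {k m n : Type*} [Fintype k]
    [Fintype n] (A : Matrix m n 𝕜) (f : k → m) {x : 𝕜 → n → 𝕜} {t : 𝕜}
    (hx : DifferentiableAt 𝕜 x t) : deriv (fun t => (A *ᵥ x t) ∘ f) t = (A *ᵥ deriv x t) ∘ f :=
  ((A.submatrix f id).hasDerivAt_mulVec hx.hasDerivAt).deriv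

theorem mulVec_add_mulVec_eq_iff_of_isUnit {n R : Type*} [Fintype n] [DecidableEq n] [CommRing R]
    {P Q : Matrix n n R} (hP : IsUnit P) (hQ : IsUnit Q) (C G : Matrix n n R) (v w b : n → R) :
    C *ᵥ v + G *ᵥ w = b ↔ (P * C * Q) *ᵥ (Q⁻¹ *ᵥ v) + (P * G * Q) *ᵥ (Q⁻¹ *ᵥ w) = P *ᵥ b := by
  have hQQ : Q * Q⁻¹ = 1 := mul_nonsing_inv Q ((isUnit_iff_isUnit_det Q).mp hQ)
  have hPinj : Function.Injective (P *ᵥ ·) := by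
    intro u u' h
    simpa [mulVec_mulVec, nonsing_inv_mul P ((isUnit_iff_isUnit_det P).mp hP)] using
      congrArg (P⁻¹ *ᵥ ·) h
  simp only [mulVec_mulVec, mul_assoc, hQQ, mul_one]
  rw [← mulVec_mulVec, ← mulVec_mulVec, ← mulVec_add]
  exact hPinj.eq_iff.symm

theorem mulVec_add_mulVec_eq_iff_reindex {m n R : Type*} [Fintype m] [Fintype n]
    [NonUnitalNonAssocSemiring R] (e : m ≃ n) (M M' : Matrix m m R) (v w b : m → R) :
    M *ᵥ v + M' *ᵥ w = b ↔
      reindex e e M *ᵥ (v ∘ e.symm) + reindex e e M' *ᵥ (w ∘ e.symm) = b ∘ e.symm := by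
  simp only [reindex_apply, submatrix_mulVec_equiv, Equiv.symm_symm, Function.comp_assoc,
    Equiv.symm_comp_self, Function.comp_id, ← Pi.add_comp]
  exact e.symm.surjective.injective_comp_right.eq_iff.symm

theorem fromBlocks_one_mulVec_add_fromBlocks_mulVec_eq_iff {m n R : Type*} [Fintype m] [Fintype n]
    [DecidableEq m] [DecidableEq n] [Ring R] (J : Matrix m m R) (N : Matrix n n R)
    (a a' u : m → R) (c c' v : n → R) :
    fromBlocks 1 0 0 N *ᵥ Sum.elim a' c' + fromBlocks J 0 0 1 *ᵥ Sum.elim a c = Sum.elim u v ↔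
      a' = -(J *ᵥ a) + u ∧ N *ᵥ c' = -c + v := by
  simp only [fromBlocks_mulVec, Sum.elim_comp_inl, Sum.elim_comp_inr, one_mulVec, zero_mulVec,
    add_zero, zero_add, ← Sum.elim_add_add, Sum.elim_eq_iff, eq_neg_add_iff_add_eq,
    add_comm (J *ᵥ a), add_comm c]

end Matrix

/-- A Weierstrass transform `(P, Q)` decouples the linear DAE
`C x′ + G x = b` into the ODE subsystem `z_D′ = −J z_D + u_D` and the purely
algebraic subsystem `N z_A′ = −z_A + u_A`, where `z = Q⁻¹ x` and
`(u_D, u_A) = P b` are split into the blocks of sizes `r` and `s`. -/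
theorem weierstrass_decouples_dae {n r s : ℕ}
    (C G : Matrix (Fin n) (Fin n) ℝ)
    (P Q : Matrix (Fin n) (Fin n) ℝ) (hP : IsUnit P) (hQ : IsUnit Q)
    (J : Matrix (Fin r) (Fin r) ℝ) (N : Matrix (Fin s) (Fin s) ℝ)
    (e : Fin n ≃ Fin r ⊕ Fin s)
    (hC : Matrix.reindex e e (P * C * Q) = Matrix.fromBlocks 1 0 0 N)
    (hG : Matrix.reindex e e (P * G * Q) = Matrix.fromBlocks J 0 0 1)
    (b : ℝ → Fin n → ℝ)
    (x : ℝ → Fin n → ℝ) (hx : Differentiable ℝ x)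
    (zD : ℝ → Fin r → ℝ) (zA : ℝ → Fin s → ℝ)
    (uD : ℝ → Fin r → ℝ) (uA : ℝ → Fin s → ℝ)
    (hzD : ∀ t i, zD t i = Q⁻¹.mulVec (x t) (e.symm (Sum.inl i)))
    (hzA : ∀ t i, zA t i = Q⁻¹.mulVec (x t) (e.symm (Sum.inr i)))
    (huD : ∀ t i, uD t i = P.mulVec (b t) (e.symm (Sum.inl i)))
    (huA : ∀ t i, uA t i = P.mulVec (b t) (e.symm (Sum.inr i))) :
    (∀ t : ℝ, C.mulVec (deriv x t) + G.mulVec (x t) = b t) ↔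
      ((∀ t : ℝ, deriv zD t = -(J.mulVec (zD t)) + uD t) ∧
       (∀ t : ℝ, N.mulVec (deriv zA t) = -zA t + uA t)) := by
  have hzD' : zD = fun t => (Q⁻¹ *ᵥ x t) ∘ e.symm ∘ Sum.inl := funext fun t => funext (hzD t)
  have hzA' : zA = fun t => (Q⁻¹ *ᵥ x t) ∘ e.symm ∘ Sum.inr := funext fun t => funext (hzA t)
  have hz t : (Q⁻¹ *ᵥ x t) ∘ e.symm = Sum.elim (zD t) (zA t) := by
    rw [hzD', hzA']
    exact (Sum.elim_comp_inl_inr _).symm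
  have hz' t : (Q⁻¹ *ᵥ deriv x t) ∘ e.symm = Sum.elim (deriv zD t) (deriv zA t) := by
    rw [hzD', hzA', deriv_mulVec_comp _ _ (hx t), deriv_mulVec_comp _ _ (hx t)]
    exact (Sum.elim_comp_inl_inr _).symm
  have hu t : (P *ᵥ b t) ∘ e.symm = Sum.elim (uD t) (uA t) := by
    rw [funext (huD t), funext (huA t)]
    exact (Sum.elim_comp_inl_inr _).symm
  have key t : C *ᵥ deriv x t + G *ᵥ x t = b t ↔
      deriv zD t = -(J *ᵥ zD t) + uD t ∧ N *ᵥ deriv zA t = -zA t + uA t := by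
    rw [mulVec_add_mulVec_eq_iff_of_isUnit hP hQ, mulVec_add_mulVec_eq_iff_reindex e, hC, hG,
      hz, hz', hu, fromBlocks_one_mulVec_add_fromBlocks_mulVec_eq_iff]
  exact (forall_congr' key).trans forall_and
end
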